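/- arXiv:2109.02792 — 3 statements merged into one kernel-verified Lean document; each statement's English description precedes it below -/
import Mathlib

section
/- For any fixed a > 0, the derivative of G_a^1 satisfies (G_a^1)'(x) = (x - a + a(ln a - ln x))/(x-a)^2, and (G_a^1)'(x) > 0 for all x > 0 with x ≠ a. -/
theorem stmt_3 (a : ℝ) (ha : 0 < a) :
    ∀ x : ℝ, 0 < x → x ≠ a →
      HasDerivAt
        (fun y : ℝ => if y = a then Real.log a + 1
                      else (y * Real.log y - a * Real.log a) / (y - a))
        ((x - a + a * (Real.log a - Real.log x)) / (x - a) ^ 2) x ∧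
      0 < (x - a + a * (Real.log a - Real.log x)) / (x - a) ^ 2 := by
  intro x hx hxa
  have hsub : x - a ≠ 0 := sub_ne_zero.mpr hxa
  constructor
  · have hf : HasDerivAt (fun y : ℝ => (y * Real.log y - a * Real.log a) / (y - a))
        ((x - a + a * (Real.log a - Real.log x)) / (x - a) ^ 2) x := by
      have h1 : HasDerivAt (fun y : ℝ => y * Real.log y - a * Real.log a)
          (Real.log x + 1) x := by
        have := ((hasDerivAt_id x).mul (Real.hasDerivAt_log hx.ne')).sub_const
          (a * Real.log a)
        exact this.congr_deriv (by simp [hx.ne'])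
      have h2 : HasDerivAt (fun y : ℝ => y - a) 1 x := (hasDerivAt_id x).sub_const a
      have := h1.div h2 hsub
      exact this.congr_deriv (by congr 1; ring)
    apply hf.congr_of_eventuallyEq
    filter_upwards [isOpen_ne.mem_nhds hxa] with y hy
    simp [hy]
  · apply div_pos _ (by positivity)
    have h := Real.log_lt_sub_one_of_pos (x := x / a) (by positivity)
      (by simp [div_eq_one_iff_eq, ha.ne', hxa])
    rw [Real.log_div hx.ne' ha.ne'] at h
    have h2 : a * (Real.log x - Real.log a) < x - a := by
      have := mul_lt_mul_of_pos_left h ha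
      rw [mul_sub] at this ⊢
      rwa [mul_sub, mul_div_cancel₀ _ ha.ne', mul_one] at this
    nlinarith [h2]
end

section
/- Energy stability of the Crank–Nicolson reaction scheme: suppose F : I → ℝ is differentiable on an open interval I, R^n, R^{n+1} ∈ I, η > 0, Δt > 0, R^{n+1} - R^n + η Δt > 0, and the scheme relation ln((R^{n+1} - R^n)/(η Δt) + 1) = -[φ(R^{n+1}, R^n) + Δt (g(R^{n+1}) - g(R^n))] holds, where φ(p,q) = (F(p) - F(q))/(p - q) for p ≠ q and φ(p,p) = F'(p), and g is monotone increasing. Then F(R^{n+1}) ≤ F(R^n). -/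
theorem stmt_6 (a b : ℝ) (F g : ℝ → ℝ) (η Δt R0 R1 : ℝ)
    (hη : 0 < η) (hΔt : 0 < Δt)
    (hR0 : R0 ∈ Set.Ioo a b) (hR1 : R1 ∈ Set.Ioo a b)
    (hF : ∀ x ∈ Set.Ioo a b, DifferentiableAt ℝ F x)
    (hg : MonotoneOn g (Set.Ioo a b))
    (hpos : 0 < R1 - R0 + η * Δt)
    (hscheme : Real.log ((R1 - R0) / (η * Δt) + 1) =
      -((if R1 = R0 then deriv F R1 else (F R1 - F R0) / (R1 - R0)) +
        Δt * (g R1 - g R0))) :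
    F R1 ≤ F R0 := by
  rcases eq_or_ne R1 R0 with h | h
  · simp [h]
  rw [if_neg h] at hscheme
  have hηΔ : 0 < η * Δt := mul_pos hη hΔt
  have hd := sub_ne_zero.mpr h
  have hcancel := div_mul_cancel₀ (F R1 - F R0) hd
  rcases hd.lt_or_gt with hlt | hgt
  · have hx1 : 0 < (R1 - R0) / (η * Δt) + 1 := by
      have h2 : 0 < (R1 - R0 + η * Δt) / (η * Δt) := div_pos hpos hηΔ
      rw [add_div, div_self hηΔ.ne'] at h2
      exact h2
    have hx2 : (R1 - R0) / (η * Δt) + 1 < 1 := by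
      have : (R1 - R0) / (η * Δt) < 0 := div_neg_of_neg_of_pos hlt hηΔ
      linarith
    have hlog := Real.log_neg hx1 hx2
    rw [hscheme] at hlog
    have hgm : g R1 ≤ g R0 := hg hR1 hR0 (by linarith)
    have hφ : 0 < (F R1 - F R0) / (R1 - R0) := by nlinarith
    nlinarith
  · have hx : 1 < (R1 - R0) / (η * Δt) + 1 := by
      have : 0 < (R1 - R0) / (η * Δt) := div_pos hgt hηΔ
      linarith
    have hlog := Real.log_pos hx
    rw [hscheme] at hlog
    have hgm : g R0 ≤ g R1 := hg hR0 hR1 (by linarith)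
    have hφ : (F R1 - F R0) / (R1 - R0) < 0 := by nlinarith
    nlinarith
end

section
/- Energy dissipation for the nonlinear diffusion scheme: suppose ρ^{n+1}, ρ^n are positive grid functions, μ^{n+1/2} = (F(ρ^{n+1}) - F(ρ^n))/(ρ^{n+1} - ρ^n) + Δt(ln ρ^{n+1} - ln ρ^n) pointwise (difference quotient of F(ρ) = ρ ln ρ + Cρ, equal to F'(ρ^n) where ρ^{n+1} = ρ^n), and ⟨ρ^{n+1} - ρ^n, μ^{n+1/2}⟩ ≤ 0 for the discrete inner product. Then F_h(ρ^{n+1}) ≤ F_h(ρ^n), where F_h(ρ) = ⟨ρ ln ρ + Cρ, 1⟩. -/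
theorem stmt_11 {ι : Type*} [Fintype ι] (h C Δt : ℝ) (hh : 0 < h) (hΔt : 0 < Δt)
    (ρ1 ρ0 μ : ι → ℝ) (hρ1 : ∀ i, 0 < ρ1 i) (hρ0 : ∀ i, 0 < ρ0 i)
    (hμ : ∀ i, μ i =
      (if ρ1 i = ρ0 i then Real.log (ρ0 i) + 1 + C
       else ((ρ1 i * Real.log (ρ1 i) + C * ρ1 i) - (ρ0 i * Real.log (ρ0 i) + C * ρ0 i))
              / (ρ1 i - ρ0 i)) +
      Δt * (Real.log (ρ1 i) - Real.log (ρ0 i)))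
    (hdiss : h ^ 3 * ∑ i, (ρ1 i - ρ0 i) * μ i ≤ 0) :
    h ^ 3 * ∑ i, (ρ1 i * Real.log (ρ1 i) + C * ρ1 i) ≤
      h ^ 3 * ∑ i, (ρ0 i * Real.log (ρ0 i) + C * ρ0 i) := by
  have key : ∀ i, (ρ1 i * Real.log (ρ1 i) + C * ρ1 i) - (ρ0 i * Real.log (ρ0 i) + C * ρ0 i)
      ≤ (ρ1 i - ρ0 i) * μ i := by
    intro i
    rw [hμ i]
    by_cases heq : ρ1 i = ρ0 i
    · simp [heq]
    · rw [if_neg heq]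
      have hne : ρ1 i - ρ0 i ≠ 0 := sub_ne_zero.mpr heq
      have hmono : 0 ≤ (ρ1 i - ρ0 i) * (Real.log (ρ1 i) - Real.log (ρ0 i)) := by
        rcases lt_or_gt_of_ne heq with hlt | hgt
        · have : Real.log (ρ1 i) ≤ Real.log (ρ0 i) :=
            Real.log_le_log (hρ1 i) hlt.le
          nlinarith
        · have : Real.log (ρ0 i) ≤ Real.log (ρ1 i) :=
            Real.log_le_log (hρ0 i) hgt.le
          exact mul_nonneg (by linarith) (by linarith)
      have hq : (ρ1 i - ρ0 i) *
          (((ρ1 i * Real.log (ρ1 i) + C * ρ1 i) - (ρ0 i * Real.log (ρ0 i) + C * ρ0 i))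
            / (ρ1 i - ρ0 i))
          = (ρ1 i * Real.log (ρ1 i) + C * ρ1 i) - (ρ0 i * Real.log (ρ0 i) + C * ρ0 i) := by
        field_simp
      calc (ρ1 i * Real.log (ρ1 i) + C * ρ1 i) - (ρ0 i * Real.log (ρ0 i) + C * ρ0 i)
          = (ρ1 i - ρ0 i) *
            (((ρ1 i * Real.log (ρ1 i) + C * ρ1 i) - (ρ0 i * Real.log (ρ0 i) + C * ρ0 i))
              / (ρ1 i - ρ0 i)) := hq.symm
        _ ≤ _ := by
            rw [mul_add]
            nlinarith [mul_nonneg hΔt.le hmono]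
  have hsum : ∑ i, ((ρ1 i * Real.log (ρ1 i) + C * ρ1 i) - (ρ0 i * Real.log (ρ0 i) + C * ρ0 i))
      ≤ ∑ i, (ρ1 i - ρ0 i) * μ i := Finset.sum_le_sum fun i _ => key i
  rw [Finset.sum_sub_distrib] at hsum
  have h3 : 0 < h ^ 3 := by positivity
  nlinarith [mul_le_mul_of_nonneg_left hsum h3.le]
end
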